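/- Let u ∈ (0,1) and ρ ∈ (−1,1). Then C(u,u;ρ) = 2u·g(u;ρ) − C(g(u;ρ), g(u;ρ); −ρ), i.e. Φ₂(Φ⁻¹(u),Φ⁻¹(u);ρ) = 2u·g(u;ρ) − Φ₂(Φ⁻¹(g(u;ρ)), Φ⁻¹(g(u;ρ)); −ρ) where g(u;ρ) = Φ(√((1−ρ)/(1+ρ))·Φ⁻¹(u)). -/

import Mathlib

open MeasureTheory Real Set

/-- Standard normal density φ. -/
noncomputable def stdPdf (x : ℝ) : ℝ :=
  (1 / Real.sqrt (2 * Real.pi)) * Real.exp (-x ^ 2 / 2)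

/-- Standard normal distribution function Φ. -/
noncomputable def stdCdf (h : ℝ) : ℝ := ∫ x in Set.Iio h, stdPdf x

/-- Inverse Φ⁻¹ of the standard normal distribution function (on (0,1)). -/
noncomputable def stdQuantile : ℝ → ℝ := Function.invFun stdCdf

/-- Bivariate standard normal density φ₂ with correlation ρ. -/
noncomputable def binPdf (x y ρ : ℝ) : ℝ :=
  (1 / (2 * Real.pi * Real.sqrt (1 - ρ ^ 2))) *
    Real.exp (-(x ^ 2 - 2 * ρ * x * y + y ^ 2) / (2 * (1 - ρ ^ 2)))

/-- Bivariate standard normal distribution function Φ₂. -/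
noncomputable def binCdf (h k ρ : ℝ) : ℝ :=
  ∫ x in Set.Iio h, ∫ y in Set.Iio k, binPdf x y ρ

/-- The bivariate normal copula C(u,v;ρ) = Φ₂(Φ⁻¹(u),Φ⁻¹(v);ρ). -/
noncomputable def normCopula (u v ρ : ℝ) : ℝ :=
  binCdf (stdQuantile u) (stdQuantile v) ρ

/-- g(u;ρ) = Φ(√((1−ρ)/(1+ρ))·Φ⁻¹(u)). -/
noncomputable def gFun (u ρ : ℝ) : ℝ :=
  stdCdf (Real.sqrt ((1 - ρ) / (1 + ρ)) * stdQuantile u)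

/-!
Differentiating under the integral sign, `t ↦ Φ₂(t,t;ρ)` has derivative `2 φ(t) Φ(α t)` with
`α = √((1-ρ)/(1+ρ))`; the two partial derivatives agree on the diagonal by the symmetry
`Φ₂(h,k;ρ) = Φ₂(k,h;ρ)`. Since the slope belonging to `-ρ` is `1/α`, the function
`t ↦ Φ₂(t,t;ρ) + Φ₂(αt,αt;-ρ) - 2 Φ(t) Φ(αt)` has zero derivative, and it vanishes at `t = 0`
because `Φ₂(0,0;ρ) + Φ₂(0,0;-ρ) = Φ(0) = 1/2` by `Φ(z) + Φ(-z) = 1`. Put `t = Φ⁻¹(u)`.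
-/

open ProbabilityTheory Filter Topology

lemma stdPdf_eq_gaussianPDFReal : stdPdf = gaussianPDFReal 0 1 := by
  ext x
  simp [stdPdf, gaussianPDFReal, div_eq_inv_mul]

lemma stdPdf_pos (x : ℝ) : 0 < stdPdf x := by
  rw [stdPdf_eq_gaussianPDFReal]; exact gaussianPDFReal_pos _ _ _ one_ne_zero

lemma continuous_stdPdf : Continuous stdPdf := by
  unfold stdPdf; fun_prop

lemma integrable_stdPdf : Integrable stdPdf := by
  rw [stdPdf_eq_gaussianPDFReal]; exact integrable_gaussianPDFReal _ _

lemma stdPdf_neg (x : ℝ) : stdPdf (-x) = stdPdf x := by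
  simp [stdPdf]

lemma hasDerivAt_integral_Iio {f : ℝ → ℝ} (hint : Integrable f) (hcont : Continuous f) (a : ℝ) :
    HasDerivAt (fun h => ∫ x in Iio h, f x) (f a) a := by
  have split (h : ℝ) : ∫ x in Iio h, f x = (∫ x in Iic 0, f x) + ∫ x in 0..h, f x := by
    rw [setIntegral_congr_set Iio_ae_eq_Iic,
      ← intervalIntegral.integral_Iic_sub_Iic hint.integrableOn hint.integrableOn]
    ring
  simp only [split]
  exact (intervalIntegral.integral_hasDerivAt_right hint.intervalIntegrable
    (hcont.stronglyMeasurableAtFilter _ _) hcont.continuousAt).const_add _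

lemma hasDerivAt_stdCdf (a : ℝ) : HasDerivAt stdCdf (stdPdf a) a :=
  hasDerivAt_integral_Iio integrable_stdPdf continuous_stdPdf a

lemma continuous_stdCdf : Continuous stdCdf :=
  continuous_iff_continuousAt.2 fun x => (hasDerivAt_stdCdf x).continuousAt

lemma stdCdf_strictMono : StrictMono stdCdf :=
  strictMono_of_deriv_pos fun x => (hasDerivAt_stdCdf x).deriv ▸ stdPdf_pos x

lemma stdCdf_eq_cdf_gaussianReal : stdCdf = cdf (gaussianReal 0 1) := by
  ext h
  rw [cdf_eq_real, measureReal_def, gaussianReal_apply_eq_integral _ one_ne_zero,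
    ENNReal.toReal_ofReal (setIntegral_nonneg measurableSet_Iic fun x _ =>
      gaussianPDFReal_nonneg _ _ x), stdCdf, stdPdf_eq_gaussianPDFReal,
    setIntegral_congr_set Iio_ae_eq_Iic]

lemma stdCdf_nonneg (h : ℝ) : 0 ≤ stdCdf h := by
  rw [stdCdf_eq_cdf_gaussianReal]; exact cdf_nonneg _ _

lemma stdCdf_le_one (h : ℝ) : stdCdf h ≤ 1 := by
  rw [stdCdf_eq_cdf_gaussianReal]; exact cdf_le_one _ _

lemma tendsto_stdCdf_atBot : Tendsto stdCdf atBot (𝓝 0) :=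
  stdCdf_eq_cdf_gaussianReal ▸ tendsto_cdf_atBot _

lemma tendsto_stdCdf_atTop : Tendsto stdCdf atTop (𝓝 1) :=
  stdCdf_eq_cdf_gaussianReal ▸ tendsto_cdf_atTop _

lemma stdCdf_add_stdCdf_neg (t : ℝ) : stdCdf t + stdCdf (-t) = 1 := by
  have hneg : stdCdf (-t) = ∫ x in Ioi t, stdPdf x := by
    rw [stdCdf, setIntegral_congr_set Iio_ae_eq_Iic, ← neg_neg t, ← integral_comp_neg_Iic]
    simp only [neg_neg, stdPdf_neg]
  have htotal : ∫ x, stdPdf x = 1 := by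
    rw [stdPdf_eq_gaussianPDFReal]; exact integral_gaussianPDFReal_eq_one _ one_ne_zero
  rw [hneg, stdCdf, setIntegral_congr_set Iio_ae_eq_Iic, ← setIntegral_union
    (Iic_disjoint_Ioi le_rfl) measurableSet_Ioi integrable_stdPdf.integrableOn
    integrable_stdPdf.integrableOn, Iic_union_Ioi, setIntegral_univ, htotal]

lemma stdCdf_zero : stdCdf 0 = 1 / 2 := by
  have h := stdCdf_add_stdCdf_neg 0
  rw [neg_zero] at h
  linarith

lemma stdCdf_stdQuantile {u : ℝ} (hu : u ∈ Ioo (0 : ℝ) 1) : stdCdf (stdQuantile u) = u := by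
  apply Function.invFun_eq
  obtain ⟨a, ha⟩ := (tendsto_stdCdf_atBot.eventually (eventually_lt_nhds hu.1)).exists
  obtain ⟨b, hb⟩ := (tendsto_stdCdf_atTop.eventually (eventually_gt_nhds hu.2)).exists
  exact intermediate_value_univ a b continuous_stdCdf ⟨ha.le, hb.le⟩

lemma stdQuantile_stdCdf (x : ℝ) : stdQuantile (stdCdf x) = x :=
  Function.leftInverse_invFun stdCdf_strictMono.injective x

lemma setIntegral_Iio_stdPdf_affine {σ : ℝ} (hσ : 0 < σ) (m k : ℝ) :
    ∫ y in Iio k, stdPdf ((y - m) / σ) / σ = stdCdf ((k - m) / σ) := by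
  have hderiv (y : ℝ) :
      HasDerivAt (fun y => stdCdf ((y - m) / σ)) (stdPdf ((y - m) / σ) / σ) y := by
    have := (hasDerivAt_stdCdf ((y - m) / σ)).comp y (((hasDerivAt_id y).sub_const m).div_const σ)
    rwa [one_div, ← div_eq_mul_inv] at this
  have hlim : Tendsto (fun y => stdCdf ((y - m) / σ)) atBot (𝓝 0) :=
    tendsto_stdCdf_atBot.comp ((tendsto_atBot_add_const_right _ (-m) tendsto_id).atBot_div_const hσ)
  rw [setIntegral_congr_set Iio_ae_eq_Iic,
    integral_Iic_of_hasDerivAt_of_tendsto (hderiv k).continuousAt.continuousWithinAt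
      (fun y _ => hderiv y)
      (((integrable_stdPdf.comp_div hσ.ne').comp_sub_right m).div_const σ).integrableOn hlim,
    sub_zero]

lemma integrable_stdPdf_mul_stdCdf_comp {g : ℝ → ℝ} (hg : Continuous g) :
    Integrable fun x => stdPdf x * stdCdf (g x) := by
  refine integrable_stdPdf.mono'
    (continuous_stdPdf.mul (continuous_stdCdf.comp hg)).aestronglyMeasurable
    (Eventually.of_forall fun x => ?_)
  rw [norm_mul, Real.norm_of_nonneg (stdPdf_pos x).le, Real.norm_of_nonneg (stdCdf_nonneg _)]
  exact mul_le_of_le_one_right (stdPdf_pos x).le (stdCdf_le_one _)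

lemma hasDerivAt_diag_of_partials {F F₁ F₂ : ℝ → ℝ → ℝ}
    (hF₁ : ∀ a b, HasDerivAt (F · b) (F₁ a b) a) (hF₂ : ∀ a b, HasDerivAt (F a ·) (F₂ a b) b)
    (hc₁ : Continuous (Function.uncurry F₁)) (hc₂ : Continuous (Function.uncurry F₂)) (t : ℝ) :
    HasDerivAt (fun t => F t t) (F₁ t t + F₂ t t) t := by
  have hF := hasStrictFDerivAt_uncurry_coprod (u := (t, t)) (f := F)
    (f₁ := fun a b => (1 : ℝ →L[ℝ] ℝ).smulRight (F₁ a b))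
    (f₂ := fun a b => (1 : ℝ →L[ℝ] ℝ).smulRight (F₂ a b))
    (Eventually.of_forall fun v => (hF₁ v.1 v.2).hasFDerivAt)
    (Eventually.of_forall fun v => (hF₂ v.1 v.2).hasFDerivAt)
    ((ContinuousLinearMap.smulRightL ℝ ℝ ℝ 1).continuous.comp hc₁).continuousAt
    ((ContinuousLinearMap.smulRightL ℝ ℝ ℝ 1).continuous.comp hc₂).continuousAt
  have hdiag : HasDerivAt (fun s : ℝ => (s, s)) (1, 1) t :=
    (hasDerivAt_id t).prodMk (hasDerivAt_id t)
  refine (hF.hasFDerivAt.comp_hasDerivAt (f := fun s : ℝ => (s, s)) t hdiag).congr_deriv ?_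
  simp [Function.HasUncurry.uncurry]

lemma binPdf_comm (x y ρ : ℝ) : binPdf x y ρ = binPdf y x ρ := by
  unfold binPdf; ring_nf

lemma continuous_binPdf (ρ : ℝ) : Continuous fun p : ℝ × ℝ => binPdf p.1 p.2 ρ := by
  unfold binPdf; fun_prop

section Bivariate

variable {ρ : ℝ}

lemma binPdf_eq_stdPdf_mul (hρ : ρ ^ 2 < 1) (x y : ℝ) :
    binPdf x y ρ = stdPdf x * (stdPdf ((y - ρ * x) / √(1 - ρ ^ 2)) / √(1 - ρ ^ 2)) := by
  have hs : 0 < 1 - ρ ^ 2 := by linarith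
  have hσ : 0 < √(1 - ρ ^ 2) := Real.sqrt_pos.2 hs
  have hexp : rexp (-x ^ 2 / 2) * rexp (-((y - ρ * x) / √(1 - ρ ^ 2)) ^ 2 / 2) =
      rexp (-(x ^ 2 - 2 * ρ * x * y + y ^ 2) / (2 * (1 - ρ ^ 2))) := by
    rw [← Real.exp_add, div_pow, Real.sq_sqrt hs.le]
    congr 1
    field_simp
    ring
  have h2π : √(2 * π) ^ 2 = 2 * π := Real.sq_sqrt (by positivity)
  unfold binPdf stdPdf
  rw [← hexp]
  field_simp
  rw [h2π]

lemma binPdf_nonneg (hρ : ρ ^ 2 < 1) (x y : ℝ) : 0 ≤ binPdf x y ρ := by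
  rw [binPdf_eq_stdPdf_mul hρ]
  have := stdPdf_pos x
  have := stdPdf_pos ((y - ρ * x) / √(1 - ρ ^ 2))
  positivity

lemma integrable_binPdf_snd (hρ : ρ ^ 2 < 1) (x : ℝ) : Integrable fun y => binPdf x y ρ := by
  simp only [binPdf_eq_stdPdf_mul hρ]
  exact (((integrable_stdPdf.comp_div (by positivity)).comp_sub_right _).div_const _).const_mul _

lemma setIntegral_Iio_binPdf (hρ : ρ ^ 2 < 1) (x k : ℝ) :
    ∫ y in Iio k, binPdf x y ρ = stdPdf x * stdCdf ((k - ρ * x) / √(1 - ρ ^ 2)) := by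
  simp only [binPdf_eq_stdPdf_mul hρ]
  rw [integral_const_mul,
    setIntegral_Iio_stdPdf_affine (Real.sqrt_pos.2 (by linarith)) (ρ * x) k]

lemma binCdf_eq_setIntegral (hρ : ρ ^ 2 < 1) (h k : ℝ) :
    binCdf h k ρ = ∫ x in Iio h, stdPdf x * stdCdf ((k - ρ * x) / √(1 - ρ ^ 2)) :=
  setIntegral_congr_fun measurableSet_Iio fun x _ => setIntegral_Iio_binPdf hρ x k

lemma binCdf_comm (hρ : ρ ^ 2 < 1) (h k : ℝ) : binCdf h k ρ = binCdf k h ρ := by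
  have hint : Integrable (Function.uncurry fun x y => binPdf x y ρ)
      ((volume.restrict (Iio h)).prod (volume.restrict (Iio k))) := by
    refine (integrable_prod_iff (continuous_binPdf ρ).aestronglyMeasurable).2
      ⟨Eventually.of_forall fun x => (integrable_binPdf_snd hρ x).restrict, ?_⟩
    simp only [Real.norm_of_nonneg (binPdf_nonneg hρ _ _), setIntegral_Iio_binPdf hρ]
    exact (integrable_stdPdf_mul_stdCdf_comp (by fun_prop)).restrict
  unfold binCdf
  rw [integral_integral_swap hint]
  simp only [binPdf_comm _ _ ρ]

lemma hasDerivAt_binCdf_fst (hρ : ρ ^ 2 < 1) (k a : ℝ) :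
    HasDerivAt (fun h => binCdf h k ρ) (stdPdf a * stdCdf ((k - ρ * a) / √(1 - ρ ^ 2))) a := by
  simp only [binCdf_eq_setIntegral hρ]
  exact hasDerivAt_integral_Iio (integrable_stdPdf_mul_stdCdf_comp (by fun_prop))
    (continuous_stdPdf.mul (continuous_stdCdf.comp (by fun_prop))) a

end Bivariate

section Reflection

variable {ρ : ℝ}

lemma sq_lt_one_of_mem_Ioo (hρ : ρ ∈ Ioo (-1 : ℝ) 1) : ρ ^ 2 < 1 := by
  obtain ⟨h₁, h₂⟩ := hρ
  nlinarith

lemma one_sub_div_sqrt_one_sub_sq (hρ : ρ ∈ Ioo (-1 : ℝ) 1) :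
    (1 - ρ) / √(1 - ρ ^ 2) = √((1 - ρ) / (1 + ρ)) := by
  obtain ⟨h₁, h₂⟩ := hρ
  rw [show 1 - ρ ^ 2 = (1 - ρ) * (1 + ρ) by ring, Real.sqrt_mul (by linarith),
    Real.sqrt_div (by linarith), div_mul_eq_div_div, Real.div_sqrt]

lemma sqrt_div_mul_sqrt_div_swap {a b : ℝ} (ha : 0 < a) (hb : 0 < b) :
    √(a / b) * √(b / a) = 1 := by
  rw [← Real.sqrt_mul (div_nonneg ha.le hb.le), div_mul_div_comm, mul_comm b,
    div_self (mul_pos ha hb).ne', Real.sqrt_one]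

lemma hasDerivAt_binCdf_diag (hρ : ρ ∈ Ioo (-1 : ℝ) 1) (t : ℝ) :
    HasDerivAt (fun t => binCdf t t ρ) (2 * (stdPdf t * stdCdf (√((1 - ρ) / (1 + ρ)) * t))) t := by
  rw [← one_sub_div_sqrt_one_sub_sq hρ, div_mul_eq_mul_div, sub_mul, one_mul]
  replace hρ := sq_lt_one_of_mem_Ioo hρ
  have hc : Continuous fun p : ℝ × ℝ => stdPdf p.1 * stdCdf ((p.2 - ρ * p.1) / √(1 - ρ ^ 2)) :=
    continuous_stdPdf.comp continuous_fst |>.mul (continuous_stdCdf.comp (by fun_prop))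
  rw [two_mul]
  refine hasDerivAt_diag_of_partials
    (F₁ := fun a b => stdPdf a * stdCdf ((b - ρ * a) / √(1 - ρ ^ 2)))
    (F₂ := fun a b => stdPdf b * stdCdf ((a - ρ * b) / √(1 - ρ ^ 2)))
    (fun a b => hasDerivAt_binCdf_fst hρ b a) (fun a b => ?_) hc (hc.comp continuous_swap) t
  simp only [binCdf_comm hρ a]
  exact hasDerivAt_binCdf_fst hρ a b

lemma binCdf_add_binCdf_neg (hρ : ρ ^ 2 < 1) (h : ℝ) :
    binCdf h 0 ρ + binCdf h 0 (-ρ) = stdCdf h := by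
  have hρ' : (-ρ) ^ 2 < 1 := by rwa [neg_sq]
  rw [binCdf_eq_setIntegral hρ, binCdf_eq_setIntegral hρ', ← integral_add
    (integrable_stdPdf_mul_stdCdf_comp (by fun_prop)).integrableOn
    (integrable_stdPdf_mul_stdCdf_comp (by fun_prop)).integrableOn]
  refine setIntegral_congr_fun measurableSet_Iio fun x _ => ?_
  rw [neg_sq, show (0 - -ρ * x) / √(1 - ρ ^ 2) = -((0 - ρ * x) / √(1 - ρ ^ 2)) by ring,
    ← mul_add, stdCdf_add_stdCdf_neg, mul_one]

lemma binCdf_diag_add_binCdf_diag_neg (hρ : ρ ∈ Ioo (-1 : ℝ) 1) (t : ℝ) :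
    binCdf t t ρ + binCdf (√((1 - ρ) / (1 + ρ)) * t) (√((1 - ρ) / (1 + ρ)) * t) (-ρ) =
      2 * stdCdf t * stdCdf (√((1 - ρ) / (1 + ρ)) * t) := by
  set α := √((1 - ρ) / (1 + ρ)) with hα_def
  have hρ' : -ρ ∈ Ioo (-1 : ℝ) 1 := ⟨by linarith [hρ.2], by linarith [hρ.1]⟩
  have hα : √((1 - -ρ) / (1 + -ρ)) * α = 1 := by
    rw [sub_neg_eq_add, ← sub_eq_add_neg]
    exact sqrt_div_mul_sqrt_div_swap (by linarith [hρ.1]) (by linarith [hρ.2])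
  set L : ℝ → ℝ := fun t =>
    binCdf t t ρ + binCdf (α * t) (α * t) (-ρ) - 2 * (stdCdf t * stdCdf (α * t))
  have hL (s : ℝ) : HasDerivAt L 0 s := by
    have hαs : HasDerivAt (α * ·) α s := by simpa using (hasDerivAt_id s).const_mul α
    have := ((hasDerivAt_binCdf_diag hρ s).add
      ((hasDerivAt_binCdf_diag hρ' (α * s)).comp s hαs)).sub
      (((hasDerivAt_stdCdf s).mul ((hasDerivAt_stdCdf (α * s)).comp s hαs)).const_mul 2)
    rw [← mul_assoc _ α s, hα, one_mul, ← hα_def] at this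
    exact this.congr_deriv (show _ = (0 : ℝ) by simp only [Function.comp_apply]; ring)
  have hL0 : L 0 = 0 := by
    simp only [L, mul_zero, binCdf_add_binCdf_neg (sq_lt_one_of_mem_Ioo hρ), stdCdf_zero]
    norm_num
  have hconst := is_const_of_deriv_eq_zero (fun s => (hL s).differentiableAt)
    (fun s => (hL s).deriv) t 0
  simp only [L] at hconst hL0
  linarith

end Reflection

theorem copula_diagonal_reflection (u ρ : ℝ) (hu : u ∈ Set.Ioo (0 : ℝ) 1)
    (hρ : ρ ∈ Set.Ioo (-1 : ℝ) 1) :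
    normCopula u u ρ =
      2 * u * gFun u ρ - normCopula (gFun u ρ) (gFun u ρ) (-ρ) := by
  have hg : stdQuantile (gFun u ρ) = √((1 - ρ) / (1 + ρ)) * stdQuantile u :=
    stdQuantile_stdCdf _
  have key := binCdf_diag_add_binCdf_diag_neg hρ (stdQuantile u)
  rw [stdCdf_stdQuantile hu] at key
  rw [normCopula, normCopula, hg, gFun]
  linarith
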